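/- arXiv:1708.01559 — 5 statements merged into one kernel-verified Lean document; each statement's English description precedes it below -/
import Mathlib

section
/- Let q = (x,y,z) be a unit vector in ℝ³ with |z| ≤ y ≤ x. Then min( arcsin(|x − y|/√2), arcsin(|y − z|/√2), arcsin(|y + z|/√2) ) ≤ arcsin(1/√10) = arccos(3/√10), with equality if and only if q = (2/√5, 1/√5, 0). That is, the point of the spherical triangle 𝒟 = {(x,y,z) on the unit sphere : |z| ≤ y ≤ x} furthest from the three great circles x − y = 0, y − z = 0, y + z = 0 (which correspond to isosceles triangles) is its incenter (2/√5, 1/√5, 0), at spherical distance arccos(3/√10) from each. -/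
set_option maxHeartbeats 1000000


/-- The point of the spherical triangle 𝒟 = {(x,y,z) : x²+y²+z²=1, |z| ≤ y ≤ x} furthest
from the three great circles x−y=0, y−z=0, y+z=0 of isosceles triangles is its incenter
(2/√5, 1/√5, 0), at spherical distance arcsin(1/√10) = arccos(3/√10) from each. -/
theorem incenter_of_isosceles_tiling_triangle (x y z : ℝ)
    (hsph : x ^ 2 + y ^ 2 + z ^ 2 = 1) (h1 : |z| ≤ y) (h2 : y ≤ x) :
    min (min (Real.arcsin (|x - y| / Real.sqrt 2))
             (Real.arcsin (|y - z| / Real.sqrt 2)))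
        (Real.arcsin (|y + z| / Real.sqrt 2))
      ≤ Real.arcsin (1 / Real.sqrt 10) ∧
    (min (min (Real.arcsin (|x - y| / Real.sqrt 2))
              (Real.arcsin (|y - z| / Real.sqrt 2)))
         (Real.arcsin (|y + z| / Real.sqrt 2))
       = Real.arcsin (1 / Real.sqrt 10) ↔
      x = 2 / Real.sqrt 5 ∧ y = 1 / Real.sqrt 5 ∧ z = 0) ∧
    Real.arcsin (1 / Real.sqrt 10) = Real.arccos (3 / Real.sqrt 10) := by
  have hz := abs_le.mp h1
  have ha1 : |x - y| = x - y := abs_of_nonneg (by linarith)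
  have ha2 : |y - z| = y - z := abs_of_nonneg (by linarith [hz.2])
  have ha3 : |y + z| = y + z := abs_of_nonneg (by linarith [hz.1])
  have h2s : (0:ℝ) < Real.sqrt 2 := by positivity
  have h2sq : Real.sqrt 2 ^ 2 = 2 := Real.sq_sqrt (by norm_num)
  have h5p : (0:ℝ) < Real.sqrt 5 := by positivity
  have h5 : Real.sqrt 5 ^ 2 = 5 := Real.sq_sqrt (by norm_num)
  have h10p : (0:ℝ) < Real.sqrt 10 := by positivity
  have h10sq : Real.sqrt 10 ^ 2 = 10 := Real.sq_sqrt (by norm_num)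
  have h10 : Real.sqrt 10 = Real.sqrt 2 * Real.sqrt 5 := by
    rw [← Real.sqrt_mul (by norm_num)]; norm_num
  set m := min (min (x - y) (y - z)) (y + z) with hm
  have hmin : min (min (Real.arcsin (|x - y| / Real.sqrt 2))
             (Real.arcsin (|y - z| / Real.sqrt 2)))
        (Real.arcsin (|y + z| / Real.sqrt 2)) = Real.arcsin (m / Real.sqrt 2) := by
    rw [ha1, ha2, ha3, hm, ← min_div_div_right h2s.le, ← min_div_div_right h2s.le,
      Real.monotone_arcsin.map_min, Real.monotone_arcsin.map_min]
  have b1 : m ≤ x - y := le_trans (min_le_left _ _) (min_le_left _ _)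
  have b2 : m ≤ y - z := le_trans (min_le_left _ _) (min_le_right _ _)
  have b3 : m ≤ y + z := min_le_right _ _
  have hm0 : 0 ≤ m := le_min (le_min (by linarith) (by linarith [hz.2])) (by linarith [hz.1])
  have hxm : 0 ≤ x - (y + m) := by linarith
  have hxm' : 0 ≤ x + (y + m) := by linarith
  have hxsq : (y + m) ^ 2 ≤ x ^ 2 := by nlinarith [mul_nonneg hxm hxm']
  have key5 : 5 * m ^ 2 ≤ 1 := by nlinarith [sq_nonneg z, sq_nonneg (y - m)]
  have key : m ≤ 1 / Real.sqrt 5 := by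
    rw [le_div_iff₀ h5p]
    nlinarith [sq_nonneg (m * Real.sqrt 5 - 1), mul_nonneg hm0 h5p.le]
  have hc : (1:ℝ) / Real.sqrt 10 = (1 / Real.sqrt 5) / Real.sqrt 2 := by
    rw [h10]; ring
  refine ⟨?_, ?_, ?_⟩
  · rw [hmin, hc]
    exact Real.monotone_arcsin (by gcongr)
  · rw [hmin, hc]
    have h2ge1 : (1:ℝ) ≤ Real.sqrt 2 := by
      rw [show (1:ℝ) = Real.sqrt 1 from Real.sqrt_one.symm]
      exact Real.sqrt_le_sqrt (by norm_num)
    have h5ge1 : (1:ℝ) ≤ Real.sqrt 5 := by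
      rw [show (1:ℝ) = Real.sqrt 1 from Real.sqrt_one.symm]
      exact Real.sqrt_le_sqrt (by norm_num)
    have hd1 : (1:ℝ) / Real.sqrt 5 ≤ 1 := (div_le_one h5p).2 h5ge1
    have hbm : m / Real.sqrt 2 ≤ 1 := by
      rw [div_le_one h2s]; linarith
    have hbc : (1:ℝ) / Real.sqrt 5 / Real.sqrt 2 ≤ 1 := by
      rw [div_le_one h2s]; linarith
    have hnm : (-1:ℝ) ≤ m / Real.sqrt 2 := le_trans (by norm_num : (-1:ℝ) ≤ 0) (by positivity)
    have hnc : (-1:ℝ) ≤ 1 / Real.sqrt 5 / Real.sqrt 2 := le_trans (by norm_num : (-1:ℝ) ≤ 0) (by positivity)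
    rw [Real.arcsin_inj hnm hbm hnc hbc, div_left_inj' h2s.ne']
    constructor
    · intro hme
      have hmp : (0:ℝ) < m := by rw [hme]; positivity
      have hmsq : m ^ 2 = 1 / 5 := by rw [hme, div_pow, h5, one_pow]
      have hyle : y ≤ m := by nlinarith [sq_nonneg z]
      have hy : y = m := le_antisymm hyle (by linarith)
      have hzz : z = 0 := by
        have hzle : z ^ 2 ≤ 0 := by nlinarith
        exact pow_eq_zero_iff (n := 2) (by norm_num) |>.mp
          (le_antisymm hzle (sq_nonneg z))
      have hxle : x ≤ 2 * m := by nlinarith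
      have hx : x = 2 * m := le_antisymm hxle (by linarith)
      refine ⟨by rw [hx, hme]; ring, by rw [hy, hme], hzz⟩
    · rintro ⟨hx, hy, hzz⟩
      have hxy : x - y = 1 / Real.sqrt 5 := by rw [hx, hy]; ring
      rw [hm, hxy, hy, hzz]
      simp
  · have h3 : (0:ℝ) ≤ 3 / Real.sqrt 10 := by positivity
    rw [Real.arccos_eq_arcsin h3]
    congr 1
    rw [div_pow, h10sq]
    rw [show (1:ℝ) - 3^2/10 = 1/10 by norm_num, one_div, one_div, Real.sqrt_inv]
end

section
/- Let q = (x,y,z) be a unit vector in ℝ³ with 0 ≤ z ≤ y ≤ x. Then min( arcsin((x − y)/√2), arcsin((y − z)/√2), arcsin(z) ) ≤ arcsin(√((13 − 6√2)/97)), with equality if and only if q = (1 + 2√2, 1 + √2, 1)/√(13 + 6√2). That is, the incenter of the spherical triangle 𝒯 = {(x,y,z) on the unit sphere : 0 ≤ z ≤ y ≤ x}, bounded by the great circles x − y = 0, y − z = 0, z = 0, is the point (1 + 2√2, 1 + √2, 1)/√(13 + 6√2), and the inradius is arcsin(√((13 − 6√2)/97)). -/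
/-- The incenter of the spherical triangle 𝒯 = {(x,y,z) : x²+y²+z²=1, 0 ≤ z ≤ y ≤ x},
bounded by the great circles x−y=0, y−z=0, z=0, is the point
(1+2√2, 1+√2, 1)/√(13+6√2), and the inradius is arcsin(√((13−6√2)/97)). -/
theorem incenter_of_fundamental_domain (x y z : ℝ)
    (hsph : x ^ 2 + y ^ 2 + z ^ 2 = 1) (h0 : 0 ≤ z) (h1 : z ≤ y) (h2 : y ≤ x) :
    min (min (Real.arcsin ((x - y) / Real.sqrt 2))
             (Real.arcsin ((y - z) / Real.sqrt 2)))
        (Real.arcsin z)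
      ≤ Real.arcsin (Real.sqrt ((13 - 6 * Real.sqrt 2) / 97)) ∧
    (min (min (Real.arcsin ((x - y) / Real.sqrt 2))
              (Real.arcsin ((y - z) / Real.sqrt 2)))
         (Real.arcsin z)
       = Real.arcsin (Real.sqrt ((13 - 6 * Real.sqrt 2) / 97)) ↔
      x = (1 + 2 * Real.sqrt 2) / Real.sqrt (13 + 6 * Real.sqrt 2) ∧
      y = (1 + Real.sqrt 2) / Real.sqrt (13 + 6 * Real.sqrt 2) ∧
      z = 1 / Real.sqrt (13 + 6 * Real.sqrt 2)) := by
  have sqle : ∀ a b : ℝ, 0 ≤ a → 0 ≤ b → a ^ 2 ≤ b ^ 2 → a ≤ b := by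
    intro a b ha hb h
    have h' := Real.sqrt_le_sqrt h
    rwa [Real.sqrt_sq ha, Real.sqrt_sq hb] at h'
  set s := Real.sqrt 2 with hsdef
  have hs0 : 0 < s := Real.sqrt_pos.mpr (by norm_num)
  have hs2 : s ^ 2 = 2 := Real.sq_sqrt (by norm_num)
  have hKpos : (0:ℝ) < 13 + 6 * s := by positivity
  have hK'pos : (0:ℝ) < 13 - 6 * s := by nlinarith
  set K := Real.sqrt (13 + 6 * s) with hKdef
  have hK0 : 0 < K := Real.sqrt_pos.mpr hKpos
  have hK2 : K ^ 2 = 13 + 6 * s := Real.sq_sqrt hKpos.le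
  set r := Real.sqrt ((13 - 6 * s) / 97) with hrdef
  have hr0 : 0 ≤ r := Real.sqrt_nonneg _
  have hrsq : r ^ 2 * 97 = 13 - 6 * s := by
    rw [hrdef, Real.sq_sqrt (div_nonneg hK'pos.le (by norm_num))]
    field_simp
  have hrK : r = 1 / K := by
    rw [hrdef, hKdef,
      show (13 - 6*s)/97 = (13 + 6*s)⁻¹ by
        rw [inv_eq_one_div, div_eq_div_iff (by norm_num) hKpos.ne']
        linear_combination (-36 : ℝ) * hs2,
      Real.sqrt_inv, one_div]
  have hr1 : r ≤ 1 := by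
    rw [hrK, div_le_one hK0]
    nlinarith [hK2, hK0]
  set A := (x - y) / s with hAdef
  set B := (y - z) / s with hBdef
  set m := min (min A B) z with hmdef
  have hsne : s ≠ 0 := hs0.ne'
  have hKne : K ≠ 0 := hK0.ne'
  clear_value s K r A B m
  have hA0 : 0 ≤ A := by rw [hAdef]; exact div_nonneg (by linarith) hs0.le
  have hB0 : 0 ≤ B := by rw [hBdef]; exact div_nonneg (by linarith) hs0.le
  have hm0 : 0 ≤ m := by rw [hmdef]; exact le_min (le_min hA0 hB0) h0
  have hmA : m ≤ A := by rw [hmdef]; exact le_trans (min_le_left _ _) (min_le_left _ _)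
  have hmB : m ≤ B := by rw [hmdef]; exact le_trans (min_le_left _ _) (min_le_right _ _)
  have hmz : m ≤ z := by rw [hmdef]; exact min_le_right _ _
  have hxy : m * s ≤ x - y := (le_div_iff₀ hs0).mp (hAdef ▸ hmA)
  have hyz : m * s ≤ y - z := (le_div_iff₀ hs0).mp (hBdef ▸ hmB)
  have hxm : (1 + 2*s) * m ≤ x := by linarith
  have hym : (1 + s) * m ≤ y := by linarith
  have hy0 : 0 ≤ y := le_trans h0 h1
  have hx0 : 0 ≤ x := le_trans hy0 h2
  have e1 : ((1 + 2*s) * m) ^ 2 = (9 + 4*s) * m ^ 2 := by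
    linear_combination (4 * m ^ 2) * hs2
  have e2 : ((1 + s) * m) ^ 2 = (3 + 2*s) * m ^ 2 := by
    linear_combination m ^ 2 * hs2
  have q1 : (9 + 4*s) * m ^ 2 ≤ x ^ 2 := by
    rw [← e1]; exact pow_le_pow_left₀ (mul_nonneg (by linarith) hm0) hxm 2
  have q2 : (3 + 2*s) * m ^ 2 ≤ y ^ 2 := by
    rw [← e2]; exact pow_le_pow_left₀ (mul_nonneg (by linarith) hm0) hym 2
  have q3 : m ^ 2 ≤ z ^ 2 := pow_le_pow_left₀ hm0 hmz 2
  have key : (13 + 6 * s) * m ^ 2 ≤ 1 := by linarith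
  have key97 : 97 * m ^ 2 ≤ 13 - 6 * s := by
    nlinarith [mul_le_mul_of_nonneg_right key hK'pos.le, hs2, sq_nonneg m]
  have hm2r2 : m ^ 2 ≤ r ^ 2 := by linarith
  have hmr : m ≤ r := sqle m r hm0 hr0 hm2r2
  have hminarc : min (min (Real.arcsin A) (Real.arcsin B)) (Real.arcsin z)
      = Real.arcsin m := by
    rw [hmdef, ← Real.monotone_arcsin.map_min, ← Real.monotone_arcsin.map_min]
  rw [hminarc]
  constructor
  · exact Real.monotone_arcsin hmr
  · rw [Real.arcsin_inj (by linarith) (hmr.trans hr1) (by linarith) hr1]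
    constructor
    · intro hmr'
      have hmval : m = 1 / K := hmr'.trans hrK
      have hmK : m * K = 1 := by
        rw [hmval]; exact one_div_mul_cancel hKne
      have h1k : m ^ 2 * (13 + 6 * s) = 1 := by
        rw [← hK2, ← mul_pow, hmK]; norm_num
      have hxle : x ≤ (1 + 2*s) * m := by
        refine sqle x _ hx0 (mul_nonneg (by linarith) hm0) ?_
        rw [e1]; linarith
      have hyle : y ≤ (1 + s) * m := by
        refine sqle y _ hy0 (mul_nonneg (by linarith) hm0) ?_
        rw [e2]; linarith
      have hzle : z ≤ m := by
        refine sqle z m h0 hm0 ?_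
        linarith
      refine ⟨?_, ?_, ?_⟩
      · rw [le_antisymm hxle hxm, hmval]; ring
      · rw [le_antisymm hyle hym, hmval]; ring
      · rw [le_antisymm hzle hmz, hmval]
    · rintro ⟨hx, hy, hz⟩
      have hAval : A = 1 / K := by
        rw [hAdef, hx, hy]
        field_simp
        ring
      have hBval : B = 1 / K := by
        rw [hBdef, hy, hz]
        field_simp
        ring
      rw [hmdef, hAval, hBval, hz, min_self, min_self, hrK]
end

section
/- The point (1 + 2√2, 1 + √2, 1)/√(13 + 6√2) of the unit sphere corresponds, under a = 1 − x², b = 1 − y², c = 1 − z², to the triangle with side lengths a = (28 + 2√2)/97, b = (82 − 8√2)/97, c = (84 + 6√2)/97; these satisfy 0 < a < b < c < 1 and a + b + c = 2, so this triangle (the least symmetric triangle) is scalene and non-degenerate. -/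
/-! Each coordinate has the form `u / √(13 + 6√2)`, so `1 - (u / √(13 + 6√2))²` is
`(13 + 6√2 - u²) / (13 + 6√2)`, which is rationalised by `(13 + 6√2)(13 - 6√2) = 97`.
The inequalities between the side lengths only need `0 ≤ √2 < 3/2`. -/

open Real

theorem one_sub_div_sqrt_sq {d : ℝ} (hd : 0 < d) (u : ℝ) :
    1 - (u / √d) ^ 2 = (d - u ^ 2) / d := by
  rw [div_pow, sq_sqrt hd.le]
  field_simp

/-- The point (1+2√2, 1+√2, 1)/√(13+6√2) corresponds, under a = 1−x², b = 1−y², c = 1−z²,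
to the triangle with side lengths a = (28+2√2)/97, b = (82−8√2)/97, c = (84+6√2)/97,
which satisfy 0 < a < b < c < 1 and a + b + c = 2 (scalene and non-degenerate). -/
theorem least_symmetric_triangle_side_lengths :
    1 - ((1 + 2 * Real.sqrt 2) / Real.sqrt (13 + 6 * Real.sqrt 2)) ^ 2
        = (28 + 2 * Real.sqrt 2) / 97 ∧
    1 - ((1 + Real.sqrt 2) / Real.sqrt (13 + 6 * Real.sqrt 2)) ^ 2
        = (82 - 8 * Real.sqrt 2) / 97 ∧
    1 - (1 / Real.sqrt (13 + 6 * Real.sqrt 2)) ^ 2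
        = (84 + 6 * Real.sqrt 2) / 97 ∧
    (0 : ℝ) < (28 + 2 * Real.sqrt 2) / 97 ∧
    (28 + 2 * Real.sqrt 2) / 97 < (82 - 8 * Real.sqrt 2) / 97 ∧
    (82 - 8 * Real.sqrt 2) / 97 < (84 + 6 * Real.sqrt 2) / 97 ∧
    (84 + 6 * Real.sqrt 2) / 97 < 1 ∧
    (28 + 2 * Real.sqrt 2) / 97 + (82 - 8 * Real.sqrt 2) / 97
        + (84 + 6 * Real.sqrt 2) / 97 = 2 := by
  have hsq : √2 ^ 2 = 2 := sq_sqrt zero_le_two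
  have hnonneg : 0 ≤ √2 := sqrt_nonneg 2
  have hlt : √2 < 3 / 2 := sqrt_two_lt_three_halves
  have hD : 0 < 13 + 6 * √2 := by positivity
  simp only [one_sub_div_sqrt_sq hD, div_eq_div_iff hD.ne' (by norm_num : (97 : ℝ) ≠ 0)]
  refine ⟨?_, ?_, ?_, by positivity, by linarith, by linarith, by linarith, by ring⟩
  · linear_combination (-400) * hsq
  · linear_combination (-49) * hsq
  · linear_combination (-36) * hsq
end

section
/- Let R = {(x,y,z) on the unit sphere in ℝ³ : x, y, z ≥ 0 and z = xy} be the curve of right triangles. Then the infimum over v ∈ R of arccos⟨v, (1/√3, 1/√3, 1/√3)⟩ equals arccos((√2 − 1 + 2√(√2 − 1))/√3), and it is attained at the point (√(√2 − 1), √(√2 − 1), √2 − 1), which corresponds to the 45–45–90 right triangle with side lengths (2 − √2, 2 − √2, 2√2 − 2). That is, the spherical distance from the equilateral-triangle point to the set of right triangles is arccos((√2 − 1 + 2√(√2 − 1))/√3). -/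
lemma arccos_anti {x y : ℝ} (h : x ≤ y) : Real.arccos y ≤ Real.arccos x := by
  unfold Real.arccos
  have := Real.monotone_arcsin h
  linarith

lemma key_ineq {u v : ℝ} (hu : 0 ≤ u) (hv : 0 ≤ v)
    (h : u ^ 2 + v ^ 2 + (u * v) ^ 2 = 1) :
    u + v + u * v ≤ Real.sqrt 2 - 1 + 2 * Real.sqrt (Real.sqrt 2 - 1) := by
  set s := Real.sqrt (Real.sqrt 2 - 1) with hs
  have h2 : (Real.sqrt 2) ^ 2 = 2 := Real.sq_sqrt (by norm_num)
  have h2' : (1:ℝ) ≤ Real.sqrt 2 := by nlinarith [Real.sqrt_nonneg 2]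
  have hs0 : 0 ≤ s := Real.sqrt_nonneg _
  have hs2 : s ^ 2 = Real.sqrt 2 - 1 := Real.sq_sqrt (by linarith)
  -- q := u*v satisfies q ≤ s^2
  have hq : u * v ≤ s ^ 2 := by nlinarith [sq_nonneg (u - v), sq_nonneg (u*v + 1 - Real.sqrt 2), Real.sqrt_nonneg 2]
  have hpq : (u + v) ^ 2 = 1 + 2 * (u*v) - (u*v)^2 := by nlinarith
  have hrhs : 0 ≤ 2 * s + s ^ 2 - u * v := by nlinarith
  have hsq : (u + v) ^ 2 ≤ (2 * s + s ^ 2 - u * v) ^ 2 := by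
    nlinarith [mul_nonneg (sub_nonneg.2 hq) (by nlinarith : (0:ℝ) ≤ 1 + 2 * s - u * v)]
  have : u + v ≤ 2 * s + s ^ 2 - u * v := by nlinarith [add_nonneg hu hv]
  linarith

/-- The spherical distance from the equilateral-triangle point (1/√3, 1/√3, 1/√3) to the
curve R of right triangles is arccos((√2 − 1 + 2√(√2 − 1))/√3), attained at the point
(√(√2−1), √(√2−1), √2−1), which corresponds to the 45–45–90 triangle with side lengths
(2 − √2, 2 − √2, 2√2 − 2). -/
theorem dist_equilateral_to_right_triangles :
    sInf {d : ℝ | ∃ u v w : ℝ, u ^ 2 + v ^ 2 + w ^ 2 = 1 ∧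
          0 ≤ u ∧ 0 ≤ v ∧ 0 ≤ w ∧ w = u * v ∧
          d = Real.arccos (u * (1 / Real.sqrt 3) + v * (1 / Real.sqrt 3)
                + w * (1 / Real.sqrt 3))}
      = Real.arccos ((Real.sqrt 2 - 1 + 2 * Real.sqrt (Real.sqrt 2 - 1)) / Real.sqrt 3) ∧
    (Real.sqrt (Real.sqrt 2 - 1)) ^ 2 + (Real.sqrt (Real.sqrt 2 - 1)) ^ 2
        + (Real.sqrt 2 - 1) ^ 2 = 1 ∧
    (0 : ℝ) ≤ Real.sqrt (Real.sqrt 2 - 1) ∧ (0 : ℝ) ≤ Real.sqrt 2 - 1 ∧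
    Real.sqrt 2 - 1 = Real.sqrt (Real.sqrt 2 - 1) * Real.sqrt (Real.sqrt 2 - 1) ∧
    Real.arccos (Real.sqrt (Real.sqrt 2 - 1) * (1 / Real.sqrt 3)
          + Real.sqrt (Real.sqrt 2 - 1) * (1 / Real.sqrt 3)
          + (Real.sqrt 2 - 1) * (1 / Real.sqrt 3))
      = Real.arccos ((Real.sqrt 2 - 1 + 2 * Real.sqrt (Real.sqrt 2 - 1)) / Real.sqrt 3) ∧
    1 - (Real.sqrt (Real.sqrt 2 - 1)) ^ 2 = 2 - Real.sqrt 2 ∧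
    1 - (Real.sqrt 2 - 1) ^ 2 = 2 * Real.sqrt 2 - 2 := by
  have h2 : (Real.sqrt 2) ^ 2 = 2 := Real.sq_sqrt (by norm_num)
  have h2' : (1:ℝ) ≤ Real.sqrt 2 := by nlinarith [Real.sqrt_nonneg 2]
  set s := Real.sqrt (Real.sqrt 2 - 1) with hs
  have hs0 : 0 ≤ s := Real.sqrt_nonneg _
  have hs2 : s ^ 2 = Real.sqrt 2 - 1 := Real.sq_sqrt (by linarith)
  have h3 : (0:ℝ) < Real.sqrt 3 := Real.sqrt_pos.2 (by norm_num)
  have hargeq : Real.arccos (s * (1 / Real.sqrt 3) + s * (1 / Real.sqrt 3)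
        + (Real.sqrt 2 - 1) * (1 / Real.sqrt 3))
      = Real.arccos ((Real.sqrt 2 - 1 + 2 * s) / Real.sqrt 3) := by
    congr 1; ring
  refine ⟨?_, by nlinarith, hs0, by linarith, by nlinarith, hargeq, by linarith, by nlinarith⟩
  apply le_antisymm
  · apply csInf_le
    · exact ⟨0, fun d hd => by obtain ⟨u, v, w, _, _, _, _, _, rfl⟩ := hd; exact Real.arccos_nonneg _⟩
    · exact ⟨s, s, Real.sqrt 2 - 1, by nlinarith, hs0, hs0, by linarith, by nlinarith, hargeq.symm⟩
  · apply le_csInf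
    · exact ⟨_, s, s, Real.sqrt 2 - 1, by nlinarith, hs0, hs0, by linarith, by nlinarith, rfl⟩
    · rintro d ⟨u, v, w, hsum, hu, hv, hw, huv, rfl⟩
      apply arccos_anti
      have : u + v + w ≤ Real.sqrt 2 - 1 + 2 * s := by
        subst huv; exact key_ineq hu hv hsum
      have h3i : (0:ℝ) ≤ (Real.sqrt 3)⁻¹ := by positivity
      calc u * (1 / Real.sqrt 3) + v * (1 / Real.sqrt 3) + w * (1 / Real.sqrt 3)
          = (u + v + w) * (Real.sqrt 3)⁻¹ := by ring
        _ ≤ (Real.sqrt 2 - 1 + 2 * s) * (Real.sqrt 3)⁻¹ := by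
            exact mul_le_mul_of_nonneg_right this h3i
        _ = (Real.sqrt 2 - 1 + 2 * s) / Real.sqrt 3 := (div_eq_mul_inv _ _).symm
end

section
/- Let R = {(x,y,z) on the unit sphere in ℝ³ : x, y, z ≥ 0 and z = xy} be the curve of right triangles. Then the infimum over v ∈ R of arccos⟨v, (1/√2, 1/√2, 0)⟩ equals arccos(√(2(√2 − 1))), attained at the point (√(√2 − 1), √(√2 − 1), √2 − 1). That is, the spherical distance from the point corresponding to the degenerate isosceles triangle with side lengths (1/2, 1/2, 1) to the set of right triangles is arccos(√(2(√2 − 1))). -/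
/-- The spherical distance from the point (1/√2, 1/√2, 0), corresponding to the degenerate
isosceles triangle with side lengths (1/2, 1/2, 1), to the curve R of right triangles is
arccos(√(2(√2 − 1))), attained at the point (√(√2−1), √(√2−1), √2−1). -/
theorem dist_degenerate_isosceles_to_right_triangles :
    sInf {d : ℝ | ∃ u v w : ℝ, u ^ 2 + v ^ 2 + w ^ 2 = 1 ∧
          0 ≤ u ∧ 0 ≤ v ∧ 0 ≤ w ∧ w = u * v ∧
          d = Real.arccos (u * (1 / Real.sqrt 2) + v * (1 / Real.sqrt 2) + w * 0)}
      = Real.arccos (Real.sqrt (2 * (Real.sqrt 2 - 1))) ∧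
    (Real.sqrt (Real.sqrt 2 - 1)) ^ 2 + (Real.sqrt (Real.sqrt 2 - 1)) ^ 2
        + (Real.sqrt 2 - 1) ^ 2 = 1 ∧
    (0 : ℝ) ≤ Real.sqrt (Real.sqrt 2 - 1) ∧ (0 : ℝ) ≤ Real.sqrt 2 - 1 ∧
    Real.sqrt 2 - 1 = Real.sqrt (Real.sqrt 2 - 1) * Real.sqrt (Real.sqrt 2 - 1) ∧
    Real.arccos (Real.sqrt (Real.sqrt 2 - 1) * (1 / Real.sqrt 2)
          + Real.sqrt (Real.sqrt 2 - 1) * (1 / Real.sqrt 2) + (Real.sqrt 2 - 1) * 0)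
      = Real.arccos (Real.sqrt (2 * (Real.sqrt 2 - 1))) := by
  have h2 : (0:ℝ) < Real.sqrt 2 := Real.sqrt_pos.mpr (by norm_num)
  have hr2 : Real.sqrt 2 ^ 2 = 2 := Real.sq_sqrt (by norm_num)
  have h1le : (1:ℝ) ≤ Real.sqrt 2 := by nlinarith
  set a := Real.sqrt (Real.sqrt 2 - 1) with ha
  have ha2 : a ^ 2 = Real.sqrt 2 - 1 := Real.sq_sqrt (by linarith)
  have ha0 : 0 ≤ a := Real.sqrt_nonneg _
  -- the value at the optimal point
  have hM : a * (1 / Real.sqrt 2) + a * (1 / Real.sqrt 2) + (Real.sqrt 2 - 1) * 0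
      = Real.sqrt (2 * (Real.sqrt 2 - 1)) := by
    rw [Real.sqrt_mul (by norm_num : (0:ℝ) ≤ 2)]
    rw [show a * (1 / Real.sqrt 2) + a * (1 / Real.sqrt 2) + (Real.sqrt 2 - 1) * 0
        = 2 * a / Real.sqrt 2 by ring]
    rw [div_eq_iff h2.ne', ← ha]
    nlinarith [hr2]
  have hnorm : a ^ 2 + a ^ 2 + (Real.sqrt 2 - 1) ^ 2 = 1 := by nlinarith
  -- the key inequality
  have key : ∀ u v : ℝ, 0 ≤ u → 0 ≤ v → u ^ 2 + v ^ 2 + (u * v) ^ 2 = 1 →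
      u * (1 / Real.sqrt 2) + v * (1 / Real.sqrt 2) + (u * v) * 0
        ≤ Real.sqrt (2 * (Real.sqrt 2 - 1)) := by
    intro u v hu hv huv
    have hsum : (u + v) ^ 2 ≤ 4 * (Real.sqrt 2 - 1) := by
      nlinarith [sq_nonneg (u - v), sq_nonneg (u * v - (Real.sqrt 2 - 1)),
        mul_nonneg hu hv, sq_nonneg (u * v + 1), sq_nonneg (Real.sqrt 2 - 1 - u * v)]
    have hlhs : u * (1 / Real.sqrt 2) + v * (1 / Real.sqrt 2) + (u * v) * 0
        = (u + v) / Real.sqrt 2 := by ring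
    rw [hlhs, div_le_iff₀ h2]
    have h1 : 0 ≤ u + v := by linarith
    have h2' : Real.sqrt (2 * (Real.sqrt 2 - 1)) * Real.sqrt 2
        = Real.sqrt (2 * (Real.sqrt 2 - 1) * 2) := by
      rw [← Real.sqrt_mul (by nlinarith)]
    rw [h2']
    have : (u + v) = Real.sqrt ((u + v) ^ 2) := (Real.sqrt_sq h1).symm
    rw [this]
    apply Real.sqrt_le_sqrt
    nlinarith
  constructor
  · apply le_antisymm
    · apply csInf_le
      · exact ⟨0, fun d ⟨u, v, w, _, _, _, _, _, hd⟩ => hd ▸ Real.arccos_nonneg _⟩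
      · exact ⟨a, a, Real.sqrt 2 - 1, hnorm, ha0, ha0, by linarith,
          by rw [← ha2]; ring, by rw [hM]⟩
    · apply le_csInf
      · exact ⟨Real.arccos (Real.sqrt (2 * (Real.sqrt 2 - 1))),
          a, a, Real.sqrt 2 - 1, hnorm, ha0, ha0, by linarith,
          by rw [← ha2]; ring, by rw [hM]⟩
      · rintro d ⟨u, v, w, hn, hu, hv, hw, hwv, hd⟩
        subst hwv
        rw [hd]
        rw [Real.arccos_eq_pi_div_two_sub_arcsin, Real.arccos_eq_pi_div_two_sub_arcsin]
        have := Real.monotone_arcsin (key u v hu hv hn)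
        linarith
  refine ⟨hnorm, ha0, by linarith, ?_, by rw [hM]⟩
  rw [← ha2]; ring
end
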